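/- Let C be a type of feedback elements, R : Finset C → C → ℝ a return function, and ch : Finset C → C a choice function, with regret defined by Regret(Cx, Cy) = R(Cx, ch(Cx)) − R(Cy, ch(Cx)). Let D be a probability mass function on pairs of choice sets (Finset C) × (Finset C) that is symmetric, i.e., D(Cx, Cy) = D(Cy, Cx) for all Cx, Cy. Assume that the human's choice is the same on all choice sets in the support of D: for all pairs (Cx, Cy) and (Cx', Cy') in the support of D, ch(Cx) = ch(Cx'). Then the expected regret is zero: ∑_{(C_H, C_R)} D(C_H, C_R) · Regret(C_H, C_R) = 0. (Theorem 1 of the paper: under these symmetry conditions, choice set misspecification is neutral in expectation.) -/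
import Mathlib


/-- Regret of a pair of choice sets: return under the first (correct) choice set on the
human's feedback minus the return under the second (misspecified) choice set on the
same feedback. -/
def Regret {C : Type*} (R : Finset C → C → ℝ) (ch : Finset C → C)
    (Cx Cy : Finset C) : ℝ :=
  R Cx (ch Cx) - R Cy (ch Cx)

/-- Theorem 1 of the paper: if choice set pairs are drawn from a symmetric distribution
and the human would pick the same feedback on every choice set in the support of the
distribution, then the expected regret of choice set misspecification is zero. -/
theorem expected_regret_eq_zero {C : Type*} (R : Finset C → C → ℝ) (ch : Finset C → C)
    (D : PMF ((Finset C) × (Finset C)))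
    (hD_symm : ∀ Cx Cy : Finset C, D (Cx, Cy) = D (Cy, Cx))
    (hch : ∀ p q : (Finset C) × (Finset C),
      p ∈ D.support → q ∈ D.support → ch p.1 = ch q.1)
    : ∑' p : (Finset C) × (Finset C), (D p).toReal * Regret R ch p.1 p.2 = 0 := by
  set f : (Finset C) × (Finset C) → ℝ := fun p => (D p).toReal * Regret R ch p.1 p.2 with hf
  have hswap : ∀ p : (Finset C) × (Finset C), f p + f p.swap = 0 := by
    intro ⟨Cx, Cy⟩
    by_cases hp : D (Cx, Cy) = 0
    · have hq : D (Cy, Cx) = 0 := by rw [hD_symm]; exact hp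
      simp [hf, hp, hq]
    · have hmem : (Cx, Cy) ∈ D.support := by simpa [PMF.mem_support_iff] using hp
      have hmem' : (Cy, Cx) ∈ D.support := by
        simp [PMF.mem_support_iff, hD_symm Cy Cx, hp]
      have hc : ch Cx = ch Cy := hch (Cx, Cy) (Cy, Cx) hmem hmem'
      have hDeq : D (Cy, Cx) = D (Cx, Cy) := (hD_symm Cx Cy).symm
      simp only [hf, Prod.swap, Regret, hDeq, hc]
      ring
  by_cases hs : Summable f
  · have hs' : Summable (fun p : (Finset C) × (Finset C) => f p.swap) :=
      (Equiv.prodComm (Finset C) (Finset C)).summable_iff.mpr hs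
    have h1 : ∑' p : (Finset C) × (Finset C), f p.swap = ∑' p, f p :=
      (Equiv.prodComm (Finset C) (Finset C)).tsum_eq f
    have h2 : ∑' p : (Finset C) × (Finset C), (f p + f p.swap) = (∑' p, f p) + ∑' p : (Finset C) × (Finset C), f p.swap :=
      Summable.tsum_add hs hs'
    have h3 : ∑' p : (Finset C) × (Finset C), (f p + f p.swap) = 0 := by
      simp [hswap]
    have := h3.symm.trans h2
    rw [h1] at this
    linarith [this.symm]
  · exact tsum_eq_zero_of_not_summable hs
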